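/- Let U be a free ultrafilter on ℕ and (A n) a sequence of unital complex C*-algebras. If b ∈ ∏_U A n is a projection (b* = b and b² = b), then there exists a projection q ∈ ℓ∞(A) (q* = q, q² = q) with π(q) = b. -/

import Mathlib

open Filter Topology ENNReal

noncomputable section

section UltraCStar

variable (U : Ultrafilter ℕ) (A : ℕ → Type*) [∀ n, CStarAlgebra (A n)] [∀ n, Nontrivial (A n)]

/-- The limit along the ultrafilter `U` of the sequence of norms of `x ∈ ℓ∞(A)`. -/
def ulim (x : lp A ∞) : ℝ := limUnder (U : Filter ℕ) fun n => ‖x n‖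

variable {U A}

theorem exists_tendsto_norm (x : lp A ∞) :
    ∃ r : ℝ, Tendsto (fun n => ‖x n‖) (U : Filter ℕ) (𝓝 r) := by
  obtain ⟨C, hC⟩ := (lp.memℓp x).bddAbove
  have h : (↑(U.map fun n => ‖x n‖) : Filter ℝ) ≤ 𝓟 (Set.Icc 0 C) := by
    rw [Ultrafilter.coe_map, le_principal_iff, mem_map]
    exact univ_mem' fun n => ⟨norm_nonneg _, hC ⟨n, rfl⟩⟩
  obtain ⟨r, -, hr⟩ := isCompact_Icc.ultrafilter_le_nhds (U.map fun n => ‖x n‖) h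
  exact ⟨r, by rwa [Ultrafilter.coe_map] at hr⟩

theorem tendsto_ulim (x : lp A ∞) :
    Tendsto (fun n => ‖x n‖) (U : Filter ℕ) (𝓝 (ulim U A x)) :=
  tendsto_nhds_limUnder (exists_tendsto_norm x)

theorem ulim_eq {x : lp A ∞} {r : ℝ}
    (h : Tendsto (fun n => ‖x n‖) (U : Filter ℕ) (𝓝 r)) : ulim U A x = r :=
  tendsto_nhds_unique (tendsto_ulim x) h

theorem ulim_zero : ulim U A 0 = 0 :=
  ulim_eq <| by
    have : ∀ n, ‖(0 : lp A ∞) n‖ = (0 : ℝ) := fun n => by simp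
    simpa [this] using tendsto_const_nhds

theorem ulim_neg (x : lp A ∞) : ulim U A (-x) = ulim U A x :=
  ulim_eq <| (tendsto_ulim x).congr fun n => by simp

theorem ulim_add_le (x y : lp A ∞) : ulim U A (x + y) ≤ ulim U A x + ulim U A y := by
  refine le_of_tendsto_of_tendsto' (tendsto_ulim (x + y))
    ((tendsto_ulim x).add (tendsto_ulim y)) fun n => ?_
  calc ‖(x + y) n‖ = ‖x n + y n‖ := by simp
    _ ≤ ‖x n‖ + ‖y n‖ := norm_add_le _ _

theorem ulim_mul_le (x y : lp A ∞) : ulim U A (x * y) ≤ ulim U A x * ulim U A y := by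
  refine le_of_tendsto_of_tendsto' (tendsto_ulim (x * y))
    ((tendsto_ulim x).mul (tendsto_ulim y)) fun n => ?_
  calc ‖(x * y) n‖ = ‖x n * y n‖ := by simp
    _ ≤ ‖x n‖ * ‖y n‖ := norm_mul_le _ _

theorem ulim_smul (c : ℂ) (x : lp A ∞) : ulim U A (c • x) = ‖c‖ * ulim U A x :=
  ulim_eq <| ((tendsto_ulim x).const_mul ‖c‖).congr fun n => by
    simp [norm_smul]

theorem ulim_star (x : lp A ∞) : ulim U A (star x) = ulim U A x :=
  ulim_eq <| (tendsto_ulim x).congr fun n => by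
    simp [lp.coeFn_star]

variable (U A)

/-- The additive seminorm `x ↦ lim_U ‖x n‖` on `ℓ∞(A)`. -/
def upAddSeminorm : AddGroupSeminorm (lp A ∞) where
  toFun := ulim U A
  map_zero' := ulim_zero
  add_le' := ulim_add_le
  neg' := ulim_neg

/-- Type synonym of `ℓ∞(A)` carrying the seminorm `x ↦ lim_U ‖x n‖`. -/
def PreUP (_U : Ultrafilter ℕ) (A : ℕ → Type*) [∀ n, CStarAlgebra (A n)] : Type _ := lp A ∞

/-- The identity map `ℓ∞(A) → PreUP U A`. -/
def toPre : lp A ∞ → PreUP U A := id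

instance : Ring (PreUP U A) := (inferInstance : Ring (lp A ∞))

instance : StarRing (PreUP U A) := (inferInstance : StarRing (lp A ∞))

instance : SeminormedRing (PreUP U A) :=
  { (upAddSeminorm U A).toSeminormedAddCommGroup,
    (inferInstance : Ring (lp A ∞)) with
    norm_mul_le := ulim_mul_le }

instance : NormedAlgebra ℂ (PreUP U A) :=
  { (inferInstance : Algebra ℂ (lp A ∞)) with
    norm_smul_le := fun c x => le_of_eq (ulim_smul c x) }

instance : NormedStarGroup (PreUP U A) := ⟨fun x => le_of_eq (ulim_star x)⟩

/-- The ultraproduct `∏_U A n`, realized as the separation quotient of `ℓ∞(A)`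
equipped with the seminorm `x ↦ lim_U ‖x n‖`. -/
abbrev UProd : Type _ := SeparationQuotient (PreUP U A)

instance : Star (SeparationQuotient (PreUP U A)) where
  star := SeparationQuotient.lift
    (fun x : PreUP U A => SeparationQuotient.mk (star x)) fun x y h => by
      try dsimp only
      refine SeparationQuotient.mk_eq_mk.2 ?_
      rw [Metric.inseparable_iff, dist_eq_norm] at h ⊢
      rwa [← star_sub, norm_star]

theorem mk_star (x : PreUP U A) :
    (SeparationQuotient.mk (star x) : UProd U A) = star (SeparationQuotient.mk x) := rfl

instance : StarRing (SeparationQuotient (PreUP U A)) where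
  star_involutive := by
    refine SeparationQuotient.surjective_mk.forall.2 fun x => ?_
    rw [← mk_star, ← mk_star, star_star]
  star_mul := by
    intro a b
    obtain ⟨x, rfl⟩ := SeparationQuotient.surjective_mk a
    obtain ⟨y, rfl⟩ := SeparationQuotient.surjective_mk b
    rw [← SeparationQuotient.mk_mul, ← mk_star, ← mk_star, ← mk_star,
      ← SeparationQuotient.mk_mul, star_mul]
  star_add := by
    intro a b
    obtain ⟨x, rfl⟩ := SeparationQuotient.surjective_mk a
    obtain ⟨y, rfl⟩ := SeparationQuotient.surjective_mk b
    rw [← SeparationQuotient.mk_add, ← mk_star, ← mk_star, ← mk_star,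
      ← SeparationQuotient.mk_add, star_add]

/-- The quotient map `π : ℓ∞(A) → ∏_U A n`. -/
def uproj (x : lp A ∞) : UProd U A := SeparationQuotient.mk (toPre U A x)

variable {U A}

theorem uproj_add (x y : lp A ∞) : uproj U A (x + y) = uproj U A x + uproj U A y := rfl

theorem uproj_mul (x y : lp A ∞) : uproj U A (x * y) = uproj U A x * uproj U A y := rfl

theorem uproj_star (x : lp A ∞) : uproj U A (star x) = star (uproj U A x) := rfl

theorem uproj_one : uproj U A 1 = 1 := rfl

theorem norm_uproj (x : lp A ∞) : ‖uproj U A x‖ = ulim U A x := rfl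

end UltraCStar

/-! A lift `x` of `b` may be replaced by its real part `y`, so that each `y n` is selfadjoint and
`‖y n * y n - y n‖ → 0` along `U`. Once `‖y n * y n - y n‖ < 3/16`, spectral mapping confines the
spectrum of `y n` to `(-∞, 1/4] ∪ [3/4, ∞)`; a continuous function equal to `0` resp. `1` there
turns `y n` into a projection `q n` with `‖q n - y n‖ ≤ 4/3 ‖y n * y n - y n‖`. Where the defect is
larger we put `q n = 0`, which only affects a `U`-null set of indices. -/

def projCutoff (t : ℝ) : ℝ := min 1 (max 0 (2 * t - 1/2))

lemma continuous_projCutoff : Continuous projCutoff := by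
  unfold projCutoff; fun_prop

lemma projCutoff_of_le {t : ℝ} (h : t ≤ 1/4) : projCutoff t = 0 := by
  rw [projCutoff, max_eq_left (by linarith), min_eq_right zero_le_one]

lemma projCutoff_of_ge {t : ℝ} (h : 3/4 ≤ t) : projCutoff t = 1 := by
  rw [projCutoff, min_eq_left (le_max_of_le_right (by linarith))]

lemma abs_projCutoff_le_one (t : ℝ) : |projCutoff t| ≤ 1 :=
  abs_le.2 ⟨(neg_nonpos.2 zero_le_one).trans (le_min zero_le_one (le_max_left _ _)),
    min_le_left _ _⟩

section AlmostIdempotent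

variable {B : Type*} [CStarAlgebra B] {a : B}

-- `|t * t - t| ≥ 3/16` on `[1/4, 3/4]`, so below this defect the spectrum misses `(1/4, 3/4)`.
def projOfAlmostIdem (a : B) : B :=
  if ‖a * a - a‖ < 3/16 then cfc projCutoff a else 0

lemma norm_projOfAlmostIdem_le_one (a : B) : ‖projOfAlmostIdem a‖ ≤ 1 := by
  unfold projOfAlmostIdem
  split_ifs
  · exact norm_cfc_le zero_le_one fun t _ => abs_projCutoff_le_one t
  · simp

variable [Nontrivial B]

lemma IsSelfAdjoint.abs_mul_self_sub_le_norm (ha : IsSelfAdjoint a) {t : ℝ}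
    (ht : t ∈ spectrum ℝ a) : |t * t - t| ≤ ‖a * a - a‖ := by
  have hcfc : a * a - a = cfc (fun t : ℝ => t * t - t) a := by
    rw [cfc_sub (fun t : ℝ => t * t) (fun t : ℝ => t) a,
      cfc_mul (fun t : ℝ => t) (fun t : ℝ => t) a, cfc_id' ℝ a]
  have hmem : t * t - t ∈ spectrum ℝ (a * a - a) := by
    rw [hcfc, cfc_map_spectrum (fun t : ℝ => t * t - t) a]
    exact ⟨t, ht, rfl⟩
  simpa using spectrum.norm_le_norm_of_mem hmem

lemma IsSelfAdjoint.le_or_le_of_mem_spectrum (ha : IsSelfAdjoint a) (h : ‖a * a - a‖ < 3/16)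
    {t : ℝ} (ht : t ∈ spectrum ℝ a) : t ≤ 1/4 ∨ 3/4 ≤ t := by
  by_contra! hmid
  have := abs_le.1 (ha.abs_mul_self_sub_le_norm ht)
  nlinarith

lemma isStarProjection_projOfAlmostIdem (ha : IsSelfAdjoint a) :
    IsStarProjection (projOfAlmostIdem a) := by
  unfold projOfAlmostIdem
  split_ifs with h
  · refine ⟨?_, cfc_predicate projCutoff a⟩
    rw [IsIdempotentElem, ← cfc_mul projCutoff projCutoff a
      continuous_projCutoff.continuousOn continuous_projCutoff.continuousOn]
    refine cfc_congr fun t ht => ?_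
    rcases ha.le_or_le_of_mem_spectrum h ht with ht' | ht'
    · simp [projCutoff_of_le ht']
    · simp [projCutoff_of_ge ht']
  · exact IsStarProjection.zero B

lemma norm_projOfAlmostIdem_sub_le (ha : IsSelfAdjoint a) (h : ‖a * a - a‖ < 3/16) :
    ‖projOfAlmostIdem a - a‖ ≤ 4/3 * ‖a * a - a‖ := by
  have hcfc : projOfAlmostIdem a - a = cfc (fun t : ℝ => projCutoff t - t) a := by
    rw [projOfAlmostIdem, if_pos h,
      cfc_sub projCutoff (fun t : ℝ => t) a continuous_projCutoff.continuousOn, cfc_id' ℝ a]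
  rw [hcfc]
  refine norm_cfc_le (by positivity) fun t ht => ?_
  have hdef := abs_le.1 (ha.abs_mul_self_sub_le_norm ht)
  rw [Real.norm_eq_abs, abs_le]
  rcases ha.le_or_le_of_mem_spectrum h ht with ht' | ht'
  · rw [projCutoff_of_le ht']
    constructor <;> nlinarith
  · rw [projCutoff_of_ge ht']
    constructor <;> nlinarith

end AlmostIdempotent

section Sequences

variable {A : ℕ → Type*} [∀ n, CStarAlgebra (A n)]

lemma lp.isSelfAdjoint_apply {y : lp A ∞} (hy : IsSelfAdjoint y) (n : ℕ) :
    IsSelfAdjoint (y n) := by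
  rw [IsSelfAdjoint, ← lp.star_apply, hy.star_eq]

def projLift (y : lp A ∞) : lp A ∞ :=
  ⟨fun n => projOfAlmostIdem (y n),
    memℓp_infty ⟨1, by rintro - ⟨n, rfl⟩; exact norm_projOfAlmostIdem_le_one _⟩⟩

variable [∀ n, Nontrivial (A n)]

lemma isStarProjection_projLift {y : lp A ∞} (hy : IsSelfAdjoint y) :
    IsStarProjection (projLift y) where
  isIdempotentElem := lp.ext <| funext fun n =>
    (isStarProjection_projOfAlmostIdem (lp.isSelfAdjoint_apply hy n)).isIdempotentElem
  isSelfAdjoint := lp.ext <| funext fun n =>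
    (isStarProjection_projOfAlmostIdem (lp.isSelfAdjoint_apply hy n)).isSelfAdjoint

lemma tendsto_norm_projLift_sub {l : Filter ℕ} {y : lp A ∞} (hy : IsSelfAdjoint y)
    (h : Tendsto (fun n => ‖y n * y n - y n‖) l (𝓝 0)) :
    Tendsto (fun n => ‖projLift y n - y n‖) l (𝓝 0) := by
  refine squeeze_zero' (.of_forall fun n => norm_nonneg _) ?_ (by simpa using h.const_mul (4/3))
  filter_upwards [h.eventually_lt_const (by norm_num : (0 : ℝ) < 3/16)] with n hn
  exact norm_projOfAlmostIdem_sub_le (lp.isSelfAdjoint_apply hy n) hn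

variable {U : Ultrafilter ℕ}

lemma uproj_eq_zero_iff {x : lp A ∞} :
    uproj U A x = 0 ↔ Tendsto (fun n => ‖x n‖) (U : Filter ℕ) (𝓝 0) := by
  rw [← norm_eq_zero, norm_uproj]
  exact ⟨fun h => h ▸ tendsto_ulim x, ulim_eq⟩

lemma uproj_eq_uproj_iff {x y : lp A ∞} :
    uproj U A x = uproj U A y ↔ Tendsto (fun n => ‖x n - y n‖) (U : Filter ℕ) (𝓝 0) := by
  rw [← sub_eq_zero]
  exact uproj_eq_zero_iff (x := x - y)

lemma exists_isSelfAdjoint_uproj_eq {b : UProd U A} (hb : IsSelfAdjoint b) :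
    ∃ y : lp A ∞, IsSelfAdjoint y ∧ uproj U A y = b := by
  obtain ⟨x, rfl⟩ : ∃ x, uproj U A x = b := SeparationQuotient.surjective_mk b
  refine ⟨(2⁻¹ : ℂ) • (x + star x), .smul (by simp [IsSelfAdjoint]) (.add_star_self x), ?_⟩
  change (2⁻¹ : ℂ) • (uproj U A x + star (uproj U A x)) = uproj U A x
  rw [hb.star_eq, ← two_smul ℂ, smul_smul, inv_mul_cancel₀ two_ne_zero, one_smul]

end Sequences

theorem stmt2_general (U : Ultrafilter ℕ)
    (A : ℕ → Type*) [∀ n, CStarAlgebra (A n)] [∀ n, Nontrivial (A n)]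
    (b : UProd U A) (hb_star : star b = b) (hb_idem : b * b = b) :
    ∃ q : lp A ∞, star q = q ∧ q * q = q ∧ uproj U A q = b := by
  obtain ⟨y, hy, rfl⟩ := exists_isSelfAdjoint_uproj_eq hb_star
  have hdefect : Tendsto (fun n => ‖y n * y n - y n‖) (U : Filter ℕ) (𝓝 0) :=
    uproj_eq_uproj_iff.1 hb_idem
  obtain ⟨hq_idem, hq_star⟩ := isStarProjection_projLift hy
  exact ⟨projLift y, hq_star, hq_idem, uproj_eq_uproj_iff.2 (tendsto_norm_projLift_sub hy hdefect)⟩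

/-- projections lift from the ultraproduct to `ℓ∞(A)`. -/
theorem stmt2 (U : Ultrafilter ℕ) (hU : (U : Filter ℕ) ≤ Filter.cofinite)
    (A : ℕ → Type*) [∀ n, CStarAlgebra (A n)] [∀ n, Nontrivial (A n)]
    (b : UProd U A) (hb_star : star b = b) (hb_idem : b * b = b) :
    ∃ q : lp A ∞, star q = q ∧ q * q = q ∧ uproj U A q = b :=
  stmt2_general U A b hb_star hb_idem
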